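/- Let Q : ℕ → ℝ and A, μ : ℕ → ℝ be sequences with A(t) ≥ 0 and μ(t) ≥ 0 for all t, satisfying the queue recursion Q(t+1) = max(Q(t) − μ(t), 0) + A(t), and suppose Q is mean rate stable in the sense that Q(t)/t → 0 as t → ∞. Then limsup_{T→∞} (1/T)·Σ_{t<T} (A(t) − μ(t)) ≤ 0, i.e., the long-term average arrival rate does not exceed the long-term average service rate. -/
import Mathlib


open Finset Filter

/-- Necessity direction of Lemma 1 (sample-path version): if the queue
`Q(t+1) = max(Q(t) − μ(t), 0) + A(t)` is mean rate stable (`Q(t)/t → 0`),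
then the long-term average arrival rate does not exceed the long-term
average service rate. -/
theorem mean_rate_stable_implies_rate_bound
    (Q A μ : ℕ → ℝ) (hA : ∀ t, 0 ≤ A t) (hμ : ∀ t, 0 ≤ μ t)
    (hrec : ∀ t, Q (t + 1) = max (Q t - μ t) 0 + A t)
    (hstable : Tendsto (fun t : ℕ => Q t / (t : ℝ)) atTop (nhds 0)) :
    limsup (fun T : ℕ => (1 / (T : ℝ)) * ∑ t ∈ range T, (A t - μ t)) atTop ≤ 0 := by
  set f : ℕ → ℝ := fun T : ℕ => (1 / (T : ℝ)) * ∑ t ∈ range T, (A t - μ t) with hf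
  -- key telescoping inequality
  have hsum : ∀ T, ∑ t ∈ range T, (A t - μ t) ≤ Q T - Q 0 := by
    intro T
    induction T with
    | zero => simp
    | succ n ih =>
      rw [Finset.sum_range_succ]
      have h1 : Q n - μ n ≤ max (Q n - μ n) 0 := le_max_left _ _
      have := hrec n
      linarith
  -- the comparison sequence tends to 0
  have hg : Tendsto (fun T : ℕ => Q T / (T : ℝ) - Q 0 / (T : ℝ)) atTop (nhds 0) := by
    have h2 : Tendsto (fun T : ℕ => Q 0 / (T : ℝ)) atTop (nhds 0) :=
      tendsto_const_nhds.div_atTop tendsto_natCast_atTop_atTop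
    simpa using hstable.sub h2
  -- eventual bound: for every ε > 0, eventually f T ≤ ε
  have hev : ∀ ε : ℝ, 0 < ε → ∀ᶠ T : ℕ in atTop, f T ≤ ε := by
    intro ε hε
    have h1 : ∀ᶠ T : ℕ in atTop, Q T / (T : ℝ) - Q 0 / (T : ℝ) ≤ ε := by
      filter_upwards [hg.eventually (eventually_le_nhds hε)] with T hT using hT
    filter_upwards [h1, eventually_ge_atTop 1] with T hT hT1
    have hTpos : (0 : ℝ) < (T : ℝ) := by exact_mod_cast hT1
    have : f T ≤ Q T / (T : ℝ) - Q 0 / (T : ℝ) := by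
      rw [hf]
      simp only [div_sub_div_same, one_div, ← div_eq_inv_mul] at *
      gcongr
      exact hsum T
    linarith
  -- conclude via limsup = sInf of eventual upper bounds
  rw [limsup_eq]
  set S := {a : ℝ | ∀ᶠ n in atTop, f n ≤ a} with hS
  by_cases hbdd : BddBelow S
  · refine le_of_forall_pos_le_add ?_
    intro ε hε
    have hmem : ε ∈ S := hev ε hε
    simpa using csInf_le hbdd hmem
  · simp [Real.sInf_of_not_bddBelow hbdd]
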